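/- (Normed Rademacher complexity of robust regression gradients.) In the robust regression setting, suppose the norm ‖·‖ admits a convex function Ψ with Ψ(x) ≥ (1/2)‖x‖², Ψ(0) = 0, and Ψ β-smooth with respect to ‖·‖. Assume max{|ρ'(s)|, |ρ''(s)|} ≤ C_ρ on [−(BR+Y₀), BR+Y₀]. Then for any x_1,…,x_n with ‖x_t‖ ≤ R and any y_1,…,y_n ∈ [−Y₀, Y₀]: E_ε sup_{w : ‖w‖_* ≤ B} ‖Σ_{t=1}^n ε_t ∇ℓ(w;x_t,y_t)‖ ≤ (4 C_ρ B R + 2 C_ρ) · R · sqrt(2 β n), where ℓ(w;x,y) = ρ(⟨w,x⟩ − y), ∇ denotes the gradient in w, and ε_1,…,ε_n are i.i.d. Rademacher variables. -/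

import Mathlib

open MeasureTheory Finset
open scoped RealInnerProductSpace

noncomputable section

/-- `Euc d` is Euclidean space `ℝ^d`. -/
abbrev Euc (d : ℕ) : Type := EuclideanSpace ℝ (Fin d)

/-- Expectation over i.i.d. Rademacher signs `ε ∈ {±1}ⁿ`. -/
def Esign (n : ℕ) (f : (Fin n → ℝ) → ℝ) : ℝ :=
  (∑ ε : Fin n → Bool, f (fun t => if ε t then 1 else -1)) / 2 ^ n

/-- A (genuine) norm on `ℝ^d`, given as an arbitrary real-valued function. -/
def IsNorm {d : ℕ} (N : Euc d → ℝ) : Prop :=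
  (∀ x y, N (x + y) ≤ N x + N y) ∧ (∀ (a : ℝ) (x : Euc d), N (a • x) = |a| * N x) ∧
    (∀ x, N x = 0 → x = 0)

/-- The dual norm of `N`: `‖w‖_* = sup {⟨w,x⟩ : N x ≤ 1}`. -/
def dualNorm {d : ℕ} (N : Euc d → ℝ) (w : Euc d) : ℝ :=
  sSup {r : ℝ | ∃ x : Euc d, N x ≤ 1 ∧ r = ⟪w, x⟫}

/-!
By Hahn–Banach, `N z = sup_{‖u‖_* ≤ 1} ⟪u, z⟫`, so the norm of the gradient sum
`∑ ε_t ρ'(⟪w, x_t⟫ - y_t) x_t` is a scalar Rademacher process indexed by pairs `(w, u)`, with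
coefficients `a = ρ'(⟪w, x_t⟫ - y_t) ∈ [-Cρ, Cρ]` and `b = ⟪u, x_t⟫ ∈ [-R, R]`. Polarising
`4CρR · ab = (Ra + Cρb)² - (Ra - Cρb)²` and applying the Ledoux–Talagrand comparison inequality,
first to the square and then to `ρ'` (which is `Cρ`-Lipschitz by the bound on `ρ''`), leaves linear
classes, whose suprema are at most `B · N(∑ ε_t x_t)` and `N(∑ ε_t x_t)`. Finally
`E N(∑ ε_t x_t) ≤ √(2 E Ψ(∑ ε_t x_t)) ≤ √(β ∑ N(x_t)²)` by Jensen and by the smoothness of `Ψ`,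
which controls the growth of `Ψ` one sign at a time because the first-order terms cancel.
-/

def signVector {n : ℕ} (ε : Fin n → Bool) : Fin n → ℝ := fun t => if ε t then 1 else -1

lemma abs_signVector {n : ℕ} (ε : Fin n → Bool) (t : Fin n) : |signVector ε t| = 1 := by
  unfold signVector; split_ifs <;> simp

section Esign

variable {n : ℕ}

lemma Esign_eq_sum_signVector (f : (Fin n → ℝ) → ℝ) :
    Esign n f = (∑ ε : Fin n → Bool, f (signVector ε)) / 2 ^ n := rfl

lemma Esign_mono {f g : (Fin n → ℝ) → ℝ} (h : ∀ v : Fin n → ℝ, (∀ t, |v t| = 1) → f v ≤ g v) :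
    Esign n f ≤ Esign n g := by
  simp only [Esign_eq_sum_signVector]
  gcongr with ε
  exact h _ (abs_signVector ε)

lemma Esign_add (f g : (Fin n → ℝ) → ℝ) :
    Esign n (fun v => f v + g v) = Esign n f + Esign n g := by
  simp only [Esign_eq_sum_signVector, sum_add_distrib, add_div]

lemma Esign_const (c : ℝ) : Esign n (fun _ => c) = c := by
  simp [Esign_eq_sum_signVector]

lemma Esign_const_mul (c : ℝ) (f : (Fin n → ℝ) → ℝ) :
    Esign n (fun v => c * f v) = c * Esign n f := by
  simp only [Esign_eq_sum_signVector, ← mul_sum, mul_div_assoc]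

def flipSign (k : Fin n) (v : Fin n → ℝ) : Fin n → ℝ := Function.update v k (-v k)

@[simp]
lemma flipSign_self (k : Fin n) (v : Fin n → ℝ) : flipSign k v k = -v k :=
  Function.update_self _ _ _

lemma flipSign_of_ne {k t : Fin n} (v : Fin n → ℝ) (ht : t ≠ k) : flipSign k v t = v t :=
  Function.update_of_ne ht _ _

lemma abs_flipSign {k : Fin n} {v : Fin n → ℝ} (hv : ∀ t, |v t| = 1) (t : Fin n) :
    |flipSign k v t| = 1 := by
  rcases eq_or_ne t k with rfl | ht
  · simp [hv]
  · rw [flipSign_of_ne v ht, hv]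

lemma Esign_comp_flipSign (k : Fin n) (f : (Fin n → ℝ) → ℝ) :
    Esign n (fun v => f (flipSign k v)) = Esign n f := by
  have hinv : Function.Involutive fun ε : Fin n → Bool => Function.update ε k (!ε k) := by
    intro ε
    ext t
    rcases eq_or_ne t k with rfl | ht <;> simp [*]
  have hflip : ∀ ε, flipSign k (signVector ε) = signVector (hinv.toPerm _ ε) := by
    intro ε
    ext t
    rcases eq_or_ne t k with rfl | ht
    · cases h : ε t <;> simp [flipSign, signVector, h]
    · simp [flipSign, signVector, ht]
  simp only [Esign_eq_sum_signVector, hflip]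
  rw [Equiv.sum_comp (hinv.toPerm _) (fun ε => f (signVector ε))]

lemma Esign_le_of_add_flipSign_le (k : Fin n) {f g : (Fin n → ℝ) → ℝ}
    (h : ∀ v : Fin n → ℝ, (∀ t, |v t| = 1) → f v + f (flipSign k v) ≤ g v + g (flipSign k v)) :
    Esign n f ≤ Esign n g := by
  have hpair : ∀ F : (Fin n → ℝ) → ℝ, Esign n (fun v => F v + F (flipSign k v)) = 2 * Esign n F :=
    fun F => by rw [Esign_add, Esign_comp_flipSign]; ring
  have := Esign_mono h
  rw [hpair, hpair] at this
  linarith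

lemma Esign_le_map_of_concaveOn {s : Set ℝ} {φ : ℝ → ℝ} (hφ : ConcaveOn ℝ s φ)
    {f : (Fin n → ℝ) → ℝ} (hf : ∀ v : Fin n → ℝ, (∀ t, |v t| = 1) → f v ∈ s) :
    Esign n (fun v => φ (f v)) ≤ φ (Esign n f) := by
  simp only [Esign_eq_sum_signVector, div_eq_inv_mul, mul_sum]
  refine hφ.le_map_sum (fun _ _ => by positivity) ?_ fun ε _ => hf _ (abs_signVector ε)
  simp

end Esign

lemma abs_sq_div_sub_sq_div_le {x y M : ℝ} (hM : 0 < M) (hx : |x| ≤ M) (hy : |y| ≤ M) :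
    |x ^ 2 / (2 * M) - y ^ 2 / (2 * M)| ≤ |x - y| := by
  have hxy : |x + y| ≤ 2 * M := (abs_add_le x y).trans (by linarith)
  rw [← sub_div, abs_div, abs_of_pos (by positivity : (0 : ℝ) < 2 * M), div_le_iff₀ (by positivity),
    sq_sub_sq, abs_mul, mul_comm]
  exact mul_le_mul_of_nonneg_left hxy (abs_nonneg _)

section Rademacher

variable {n : ℕ} {ι : Type*}

/-- `⨆` is `0` on a class that is not bounded above, hence the `IsBoundedFamily` hypotheses. -/
def rademacher (f : Fin n → ι → ℝ) : ℝ := Esign n fun v => ⨆ p, ∑ t, v t * f t p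

def IsBoundedFamily (f : Fin n → ι → ℝ) : Prop := ∃ K, ∀ t p, |f t p| ≤ K

namespace IsBoundedFamily

lemma const_mul {f : Fin n → ι → ℝ} (hf : IsBoundedFamily f) (c : ℝ) :
    IsBoundedFamily fun t p => c * f t p := by
  obtain ⟨K, hK⟩ := hf
  exact ⟨|c| * K, fun t p => by rw [abs_mul]; gcongr; exact hK t p⟩

lemma piecewise {f g : Fin n → ι → ℝ} (hf : IsBoundedFamily f)
    (hg : IsBoundedFamily g) (s : Finset (Fin n)) : IsBoundedFamily (s.piecewise f g) := by
  obtain ⟨K, hK⟩ := hf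
  obtain ⟨K', hK'⟩ := hg
  refine ⟨max K K', fun t p => ?_⟩
  by_cases ht : t ∈ s
  · rw [s.piecewise_eq_of_mem _ _ ht]; exact (hK t p).trans (le_max_left _ _)
  · rw [s.piecewise_eq_of_notMem _ _ ht]; exact (hK' t p).trans (le_max_right _ _)

lemma bddAbove_range_sum {f : Fin n → ι → ℝ} (hf : IsBoundedFamily f) (s : Finset (Fin n))
    {v : Fin n → ℝ} (hv : ∀ t, |v t| = 1) : BddAbove (Set.range fun p => ∑ t ∈ s, v t * f t p) := by
  obtain ⟨K, hK⟩ := hf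
  refine ⟨∑ t ∈ s, K, ?_⟩
  rintro _ ⟨p, rfl⟩
  refine sum_le_sum fun t _ => (le_abs_self _).trans ?_
  rw [abs_mul, hv, one_mul]
  exact hK t p

lemma of_abs_sub_le [Nonempty ι] {f g : Fin n → ι → ℝ} (hg : IsBoundedFamily g)
    (hfg : ∀ t p q, |f t p - f t q| ≤ |g t p - g t q|) : IsBoundedFamily f := by
  obtain ⟨K, hK⟩ := hg
  obtain ⟨p₀⟩ := ‹Nonempty ι›
  refine ⟨∑ t, |f t p₀| + 2 * K, fun t p => ?_⟩
  have h₁ := single_le_sum (fun t _ => abs_nonneg (f t p₀)) (mem_univ t)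
  have h₂ := (hfg t p p₀).trans (abs_sub _ _)
  have h₃ := abs_sub_abs_le_abs_sub (f t p) (f t p₀)
  linarith [hK t p, hK t p₀]

end IsBoundedFamily

lemma ciSup_add_add_ciSup_sub_le [Nonempty ι] {A φ ψ : ι → ℝ}
    (h₁ : BddAbove (Set.range fun p => A p + ψ p)) (h₂ : BddAbove (Set.range fun p => A p - ψ p))
    (hφψ : ∀ p q, |φ p - φ q| ≤ |ψ p - ψ q|) :
    (⨆ p, A p + φ p) + (⨆ p, A p - φ p) ≤ (⨆ p, A p + ψ p) + (⨆ p, A p - ψ p) := by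
  refine ciSup_add_ciSup_le fun p q => ?_
  have hp₁ : A p + ψ p ≤ _ := le_ciSup h₁ p
  have hp₂ : A p - ψ p ≤ _ := le_ciSup h₂ p
  have hq₁ : A q + ψ q ≤ _ := le_ciSup h₁ q
  have hq₂ : A q - ψ q ≤ _ := le_ciSup h₂ q
  have := (le_abs_self _).trans (hφψ p q)
  rcases abs_cases (ψ p - ψ q) with ⟨habs, -⟩ | ⟨habs, -⟩ <;> linarith

lemma rademacher_le_update [Nonempty ι] {f : Fin n → ι → ℝ} (k : Fin n)
    {g : ι → ℝ} (hbdd : IsBoundedFamily (Function.update f k g))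
    (hfg : ∀ p q, |f k p - f k q| ≤ |g p - g q|) :
    rademacher f ≤ rademacher (Function.update f k g) := by
  refine Esign_le_of_add_flipSign_le k fun v hv => ?_
  set A : ι → ℝ := fun p => ∑ t ∈ univ.erase k, v t * f t p
  have hsplit : ∀ (u : Fin n → ℝ) (h : Fin n → ι → ℝ), (∀ t ≠ k, u t = v t) → (∀ t ≠ k, h t = f t) →
      ∀ p, ∑ t, u t * h t p = A p + u k * h k p := by
    intro u h hu hh p
    rw [← sum_erase_add _ _ (mem_univ k)]
    congr 1
    exact sum_congr rfl fun t ht => by rw [hu t (ne_of_mem_erase ht), hh t (ne_of_mem_erase ht)]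
  have hflip : ∀ t ≠ k, flipSign k v t = v t := fun t ht => flipSign_of_ne v ht
  have hupd : ∀ t ≠ k, Function.update f k g t = f t := fun t ht => Function.update_of_ne ht _ _
  have hbdd₁ := hbdd.bddAbove_range_sum univ hv
  have hbdd₂ := hbdd.bddAbove_range_sum univ (abs_flipSign (k := k) hv)
  simp only [hsplit v f (fun _ _ => rfl) (fun _ _ => rfl), hsplit _ f hflip (fun _ _ => rfl),
    hsplit v _ (fun _ _ => rfl) hupd, hsplit _ _ hflip hupd, flipSign_self, Function.update_self,
    neg_mul, ← sub_eq_add_neg] at hbdd₁ hbdd₂ ⊢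
  refine ciSup_add_add_ciSup_sub_le hbdd₁ hbdd₂ fun p q => ?_
  rw [← mul_sub, ← mul_sub, abs_mul, abs_mul, hv, one_mul, one_mul]
  exact hfg p q

/-- The Ledoux–Talagrand comparison inequality. -/
theorem rademacher_le_of_abs_sub_le [Nonempty ι] {f g : Fin n → ι → ℝ} (hg : IsBoundedFamily g)
    (hfg : ∀ t p q, |f t p - f t q| ≤ |g t p - g t q|) : rademacher f ≤ rademacher g := by
  suffices ∀ s : Finset (Fin n), rademacher f ≤ rademacher (s.piecewise g f) by
    simpa using this univ
  intro s
  induction s using Finset.induction_on with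
  | empty => simp
  | insert k s hk ih =>
    rw [piecewise_insert]
    refine ih.trans (rademacher_le_update k ?_ ?_)
    · rw [← piecewise_insert]; exact hg.piecewise (hg.of_abs_sub_le hfg) _
    · rw [s.piecewise_eq_of_notMem _ _ hk]; exact hfg k

lemma rademacher_add_le [Nonempty ι] {f g : Fin n → ι → ℝ} (hf : IsBoundedFamily f)
    (hg : IsBoundedFamily g) :
    rademacher (fun t p => f t p + g t p) ≤ rademacher f + rademacher g := by
  rw [rademacher, rademacher, rademacher, ← Esign_add]
  refine Esign_mono fun v hv => ciSup_le fun p => ?_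
  simp only [mul_add, sum_add_distrib]
  exact add_le_add (le_ciSup (hf.bddAbove_range_sum univ hv) p)
    (le_ciSup (hg.bddAbove_range_sum univ hv) p)

/-- Polarisation `4AB · ab = (Ba + Ab)² - (Ba - Ab)²` followed by the comparison inequality for
the square, which is `4AB`-Lipschitz on `[-2AB, 2AB]`. -/
theorem rademacher_mul_le [Nonempty ι] {a b : Fin n → ι → ℝ} {A B : ℝ} (hA : 0 ≤ A) (hB : 0 ≤ B)
    (ha : ∀ t p, |a t p| ≤ A) (hb : ∀ t p, |b t p| ≤ B) :
    rademacher (fun t p => a t p * b t p) ≤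
      rademacher (fun t p => B * a t p + A * b t p) +
        rademacher (fun t p => B * a t p - A * b t p) := by
  rcases hA.eq_or_lt with rfl | hA
  · have : ∀ t p, a t p = 0 := fun t p => abs_nonpos_iff.mp (ha t p)
    simp [rademacher, this, Esign_const]
  rcases hB.eq_or_lt with rfl | hB
  · have : ∀ t p, b t p = 0 := fun t p => abs_nonpos_iff.mp (hb t p)
    simp [rademacher, this, Esign_const]
  set M := 2 * A * B
  have hM : 0 < M := by positivity
  set s : Fin n → ι → ℝ := fun t p => B * a t p + A * b t p
  set e : Fin n → ι → ℝ := fun t p => B * a t p - A * b t p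
  have hs : ∀ t p, |s t p| ≤ M := fun t p => by
    have := abs_add_le (B * a t p) (A * b t p)
    rw [abs_mul, abs_mul, abs_of_pos hA, abs_of_pos hB] at this
    nlinarith [ha t p, hb t p]
  have he : ∀ t p, |e t p| ≤ M := fun t p => by
    have := abs_sub (B * a t p) (A * b t p)
    rw [abs_mul, abs_mul, abs_of_pos hA, abs_of_pos hB] at this
    nlinarith [ha t p, hb t p]
  have hs_sq : ∀ t p q, |s t p ^ 2 / (2 * M) - s t q ^ 2 / (2 * M)| ≤ |s t p - s t q| :=
    fun t p q => abs_sq_div_sub_sq_div_le hM (hs t p) (hs t q)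
  have he_sq : ∀ t p q, |-(e t p ^ 2 / (2 * M)) - -(e t q ^ 2 / (2 * M))| ≤ |e t p - e t q| :=
    fun t p q => by
      rw [neg_sub_neg, abs_sub_comm]
      exact abs_sq_div_sub_sq_div_le hM (he t p) (he t q)
  have hs_bdd : IsBoundedFamily s := ⟨M, hs⟩
  have he_bdd : IsBoundedFamily e := ⟨M, he⟩
  have hpolar : (fun t p => a t p * b t p) =
      fun t p => s t p ^ 2 / (2 * M) + -(e t p ^ 2 / (2 * M)) := by
    ext t p
    simp only [s, e, M]
    field_simp
    ring
  rw [hpolar]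
  exact (rademacher_add_le (hs_bdd.of_abs_sub_le hs_sq) (he_bdd.of_abs_sub_le he_sq)).trans
    (add_le_add (rademacher_le_of_abs_sub_le hs_bdd hs_sq)
      (rademacher_le_of_abs_sub_le he_bdd he_sq))

end Rademacher

abbrev dualBall {d : ℕ} (N : Euc d → ℝ) (B : ℝ) : Type := {w : Euc d // dualNorm N w ≤ B}

namespace IsNorm

variable {d : ℕ} {N : Euc d → ℝ}

lemma add_le (hN : IsNorm N) (x y : Euc d) : N (x + y) ≤ N x + N y := hN.1 x y

lemma map_smul (hN : IsNorm N) (a : ℝ) (x : Euc d) : N (a • x) = |a| * N x := hN.2.1 a x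

lemma map_zero (hN : IsNorm N) : N 0 = 0 := by
  simpa using hN.map_smul 0 0

lemma map_neg (hN : IsNorm N) (z : Euc d) : N (-z) = N z := by
  simpa using hN.map_smul (-1) z

lemma nonneg (hN : IsNorm N) (z : Euc d) : 0 ≤ N z := by
  have := hN.add_le z (-z)
  rw [add_neg_cancel, hN.map_zero, hN.map_neg] at this
  linarith

lemma pos (hN : IsNorm N) {z : Euc d} (hz : z ≠ 0) : 0 < N z :=
  (hN.nonneg z).lt_of_ne fun h => hz (hN.2.2 z h.symm)

lemma le_mul_norm (hN : IsNorm N) (z : Euc d) :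
    N z ≤ (∑ i, N (EuclideanSpace.single i 1)) * ‖z‖ := by
  have hz := (EuclideanSpace.basisFun (Fin d) ℝ).sum_repr z
  simp only [EuclideanSpace.basisFun_apply, EuclideanSpace.basisFun_repr] at hz
  calc N z = N (∑ i, z i • EuclideanSpace.single i (1 : ℝ)) := by rw [hz]
    _ ≤ ∑ i, |z i| * N (EuclideanSpace.single i 1) := by
      simp only [← hN.map_smul]
      exact le_sum_of_subadditive N hN.map_zero.le hN.add_le _ _
    _ ≤ ∑ i, ‖z‖ * N (EuclideanSpace.single i 1) := by
      gcongr with i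
      · exact hN.nonneg _
      · exact PiLp.norm_apply_le z i
    _ = _ := by rw [← mul_sum, mul_comm]

lemma continuous (hN : IsNorm N) : Continuous N := by
  set C := ∑ i, N (EuclideanSpace.single i 1)
  have hC : 0 ≤ C := sum_nonneg fun i _ => hN.nonneg _
  refine (LipschitzWith.of_le_add_mul ⟨C, hC⟩ fun a b => ?_).continuous
  calc N a = N (b + (a - b)) := by rw [add_sub_cancel]
    _ ≤ N b + C * ‖a - b‖ := (hN.add_le _ _).trans (by gcongr; exact hN.le_mul_norm _)
    _ = N b + C * dist a b := by rw [dist_eq_norm]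

/-- `N` is bounded below on the compact Euclidean unit sphere. -/
lemma exists_pos_mul_norm_le (hN : IsNorm N) : ∃ m > 0, ∀ z, m * ‖z‖ ≤ N z := by
  have hpos : ∀ z ∈ Metric.sphere (0 : Euc d) 1, 0 < N z := fun z hz =>
    hN.pos (by rintro rfl; simp at hz)
  obtain ⟨m, hm, hmN⟩ := (isCompact_sphere 0 1).exists_forall_le' hN.continuous.continuousOn hpos
  refine ⟨m, hm, fun z => ?_⟩
  rcases eq_or_ne z 0 with rfl | hz
  · simp [hN.map_zero]
  have hz' : 0 < ‖z‖ := norm_pos_iff.mpr hz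
  have := hmN (‖z‖⁻¹ • z) (by simp [norm_smul, hz'.ne'])
  rw [hN.map_smul, abs_of_pos (inv_pos.mpr hz')] at this
  rwa [le_inv_mul_iff₀ hz', mul_comm] at this

lemma bddAbove_inner (hN : IsNorm N) (w : Euc d) :
    BddAbove {r : ℝ | ∃ x : Euc d, N x ≤ 1 ∧ r = ⟪w, x⟫} := by
  obtain ⟨m, hm, hmN⟩ := hN.exists_pos_mul_norm_le
  refine ⟨‖w‖ * m⁻¹, ?_⟩
  rintro _ ⟨x, hx, rfl⟩
  have : ‖x‖ ≤ m⁻¹ := by rw [← one_div, le_div_iff₀ hm]; linarith [hmN x]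
  exact (real_inner_le_norm w x).trans (by gcongr)

lemma inner_le_dualNorm_mul (hN : IsNorm N) (w z : Euc d) : ⟪w, z⟫ ≤ dualNorm N w * N z := by
  rcases eq_or_ne z 0 with rfl | hz
  · simp [hN.map_zero]
  have hNz := hN.pos hz
  have : ⟪w, (N z)⁻¹ • z⟫ ≤ dualNorm N w :=
    le_csSup (hN.bddAbove_inner w)
      ⟨_, by rw [hN.map_smul, abs_of_pos (inv_pos.mpr hNz), inv_mul_cancel₀ hNz.ne'], rfl⟩
  rw [real_inner_smul_right, inv_mul_le_iff₀ hNz, mul_comm] at this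
  exact this

lemma abs_inner_le_dualNorm_mul (hN : IsNorm N) (w z : Euc d) :
    |⟪w, z⟫| ≤ dualNorm N w * N z := by
  refine abs_le.mpr ⟨?_, hN.inner_le_dualNorm_mul w z⟩
  have := hN.inner_le_dualNorm_mul w (-z)
  rw [inner_neg_right, hN.map_neg] at this
  linarith

lemma dualNorm_zero (hN : IsNorm N) : dualNorm N 0 = 0 := by
  have : {r : ℝ | ∃ x : Euc d, N x ≤ 1 ∧ r = ⟪(0 : Euc d), x⟫} = {0} := by
    ext r
    simp only [inner_zero_left, Set.mem_singleton_iff]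
    exact ⟨fun ⟨_, _, hr⟩ => hr, fun hr => ⟨0, by simp [hN.map_zero], hr⟩⟩
  rw [dualNorm, this, csSup_singleton]

lemma dualNorm_nonneg (hN : IsNorm N) (w : Euc d) : 0 ≤ dualNorm N w :=
  le_csSup (hN.bddAbove_inner w) ⟨0, by simp [hN.map_zero], by simp⟩

lemma nonempty_dualBall (hN : IsNorm N) {B : ℝ} (hB : 0 ≤ B) : Nonempty (dualBall N B) :=
  ⟨⟨0, hN.dualNorm_zero ▸ hB⟩⟩

lemma abs_inner_le_mul (hN : IsNorm N) {u x : Euc d} {B R : ℝ} (hu : dualNorm N u ≤ B)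
    (hx : N x ≤ R) : |⟪u, x⟫| ≤ B * R :=
  (hN.abs_inner_le_dualNorm_mul u x).trans
    (mul_le_mul hu hx (hN.nonneg x) ((hN.dualNorm_nonneg u).trans hu))

/-- Hahn–Banach: extend `c • z ↦ c * N z` from the line through `z` to a linear form dominated
by `N`. -/
lemma exists_dualNorm_le_one_le_inner (hN : IsNorm N) (z : Euc d) :
    ∃ u : Euc d, dualNorm N u ≤ 1 ∧ N z ≤ ⟪u, z⟫ := by
  have hH : ∀ c : ℝ, c • z = 0 → c • N z = 0 := fun c hc => by
    rcases smul_eq_zero.mp hc with rfl | rfl <;> simp [hN.map_zero]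
  set f := LinearPMap.mkSpanSingleton' (σ := RingHom.id ℝ) z (N z) hH
  have hf : ∀ x : f.domain, f x ≤ N x := by
    rintro ⟨x, hx⟩
    obtain ⟨c, rfl⟩ := Submodule.mem_span_singleton.mp
      (by rwa [LinearPMap.domain_mkSpanSingleton] at hx)
    rw [LinearPMap.mkSpanSingleton'_apply, hN.map_smul, smul_eq_mul]
    exact mul_le_mul_of_nonneg_right (le_abs_self c) (hN.nonneg z)
  obtain ⟨g, hgf, hgN⟩ := exists_extension_of_le_sublinear f N
    (fun c hc x => by rw [hN.map_smul, abs_of_pos hc]) hN.add_le hf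
  set u := (InnerProductSpace.toDual ℝ (Euc d)).symm (LinearMap.toContinuousLinearMap g)
  have hu : ∀ x, ⟪u, x⟫ = g x := fun x => by
    rw [InnerProductSpace.toDual_symm_apply]; rfl
  refine ⟨u, csSup_le ⟨0, 0, by simp [hN.map_zero]⟩ ?_, ?_⟩
  · rintro _ ⟨x, hx, rfl⟩
    exact (hu x ▸ hgN x).trans hx
  · have hz : z ∈ f.domain := by
      rw [LinearPMap.domain_mkSpanSingleton]; exact Submodule.mem_span_singleton_self z
    have := hgf ⟨z, hz⟩
    rw [hu, this, show (⟨z, hz⟩ : f.domain) = ⟨(1 : ℝ) • z, by simpa using hz⟩ by simp,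
      LinearPMap.mkSpanSingleton'_apply, RingHom.id_apply, one_smul]

end IsNorm

section Smooth

variable {d n : ℕ} {N : Euc d → ℝ} {Ψ : Euc d → ℝ} {G : Euc d → Euc d} {β : ℝ}

lemma add_add_sub_le_of_smooth (hN : IsNorm N)
    (hsmooth : ∀ x y, Ψ x ≤ Ψ y + ⟪G y, x - y⟫ + (β / 2) * (N (x - y)) ^ 2) (a b : Euc d) :
    Ψ (a + b) + Ψ (a - b) ≤ 2 * Ψ a + β * N b ^ 2 := by
  have h₁ := hsmooth (a + b) a
  have h₂ := hsmooth (a - b) a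
  rw [add_sub_cancel_left] at h₁
  rw [sub_sub_cancel_left, inner_neg_right, hN.map_neg] at h₂
  linarith

/-- The first-order terms of the smoothness inequality cancel between `v` and its flip at `k`. -/
lemma Esign_sum_smul_le_of_smooth (hN : IsNorm N)
    (hsmooth : ∀ x y, Ψ x ≤ Ψ y + ⟪G y, x - y⟫ + (β / 2) * (N (x - y)) ^ 2)
    (x : Fin n → Euc d) (s : Finset (Fin n)) :
    Esign n (fun v => Ψ (∑ t ∈ s, v t • x t)) ≤ Ψ 0 + β / 2 * ∑ t ∈ s, N (x t) ^ 2 := by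
  induction s using Finset.induction_on with
  | empty => simp [Esign_const]
  | insert k s hk ih =>
    calc Esign n (fun v => Ψ (∑ t ∈ insert k s, v t • x t))
        ≤ Esign n (fun v => Ψ (∑ t ∈ s, v t • x t) + β / 2 * N (x k) ^ 2) := by
          refine Esign_le_of_add_flipSign_le k fun v hv => ?_
          have hs : ∑ t ∈ s, flipSign k v t • x t = ∑ t ∈ s, v t • x t :=
            sum_congr rfl fun t ht => by rw [flipSign_of_ne v (ne_of_mem_of_not_mem ht hk)]
          have := add_add_sub_le_of_smooth hN hsmooth (∑ t ∈ s, v t • x t) (v k • x k)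
          rw [hN.map_smul, hv k, one_mul] at this
          rw [sum_insert hk, sum_insert hk, hs, flipSign_self, neg_smul, add_comm (v k • x k),
            neg_add_eq_sub]
          linarith
      _ = Esign n (fun v => Ψ (∑ t ∈ s, v t • x t)) + β / 2 * N (x k) ^ 2 := by
          rw [Esign_add, Esign_const]
      _ ≤ Ψ 0 + β / 2 * ∑ t ∈ insert k s, N (x t) ^ 2 := by
          rw [sum_insert hk]
          linarith

theorem Esign_norm_sum_smul_le_of_smooth (hN : IsNorm N) (hlb : ∀ x, (1 / 2) * (N x) ^ 2 ≤ Ψ x)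
    (hzero : Ψ 0 = 0) (hsmooth : ∀ x y, Ψ x ≤ Ψ y + ⟪G y, x - y⟫ + (β / 2) * (N (x - y)) ^ 2)
    (x : Fin n → Euc d) :
    Esign n (fun v => N (∑ t, v t • x t)) ≤ √(β * ∑ t, N (x t) ^ 2) := by
  have hΨ : ∀ z, 0 ≤ 2 * Ψ z := fun z => by nlinarith [hlb z, sq_nonneg (N z)]
  calc Esign n (fun v => N (∑ t, v t • x t))
      ≤ Esign n (fun v => √(2 * Ψ (∑ t, v t • x t))) :=
        Esign_mono fun v _ =>
          (Real.le_sqrt (hN.nonneg _) (hΨ _)).mpr (by linarith [hlb (∑ t, v t • x t)])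
    _ ≤ √(Esign n (fun v => 2 * Ψ (∑ t, v t • x t))) :=
        Esign_le_map_of_concaveOn Real.strictConcaveOn_sqrt.concaveOn fun v _ => hΨ _
    _ ≤ √(β * ∑ t, N (x t) ^ 2) := by
        gcongr
        have := Esign_sum_smul_le_of_smooth hN hsmooth x univ
        rw [Esign_const_mul]
        linarith

end Smooth

section Rademacher

variable {d n : ℕ} {N : Euc d → ℝ} {ι : Type*} [Nonempty ι]

lemma rademacher_mul_inner_le (hN : IsNorm N) {W : ι → Euc d} {B : ℝ}
    (hW : ∀ p, dualNorm N (W p) ≤ B) (c : ℝ) (x : Fin n → Euc d) :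
    rademacher (fun t p => c * ⟪W p, x t⟫) ≤ |c| * B * Esign n (fun v => N (∑ t, v t • x t)) := by
  rw [rademacher, ← Esign_const_mul]
  refine Esign_mono fun v _ => ciSup_le fun p => ?_
  calc ∑ t, v t * (c * ⟪W p, x t⟫) = ⟪W p, c • ∑ t, v t • x t⟫ := by
        simp only [inner_smul_right, inner_sum, mul_sum]
        exact sum_congr rfl fun t _ => by ring
    _ ≤ dualNorm N (W p) * (|c| * N (∑ t, v t • x t)) := by
        rw [← hN.map_smul]; exact hN.inner_le_dualNorm_mul _ _
    _ ≤ B * (|c| * N (∑ t, v t • x t)) := by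
        gcongr
        · exact mul_nonneg (abs_nonneg c) (hN.nonneg _)
        · exact hW p
    _ = |c| * B * N (∑ t, v t • x t) := by ring

lemma Esign_iSup_norm_sum_le_rademacher (hN : IsNorm N) {a : Fin n → ι → ℝ}
    (ha : IsBoundedFamily a) {x : Fin n → Euc d} {R : ℝ} (hx : ∀ t, N (x t) ≤ R) :
    Esign n (fun v => ⨆ p, N (∑ t, v t • (a t p • x t))) ≤
      rademacher (fun t (q : ι × dualBall N 1) => a t q.1 * ⟪(q.2 : Euc d), x t⟫) := by
  have := hN.nonempty_dualBall zero_le_one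
  obtain ⟨K, hK⟩ := ha
  have hbdd : IsBoundedFamily fun t (q : ι × dualBall N 1) => a t q.1 * ⟪(q.2 : Euc d), x t⟫ :=
    ⟨K * (1 * R), fun t q => by
      rw [abs_mul]
      exact mul_le_mul (hK t q.1) (hN.abs_inner_le_mul q.2.2 (hx t)) (abs_nonneg _)
        ((abs_nonneg _).trans (hK t q.1))⟩
  refine Esign_mono fun v hv => ciSup_le fun p => ?_
  obtain ⟨u, hu, hNu⟩ := hN.exists_dualNorm_le_one_le_inner (∑ t, v t • (a t p • x t))
  calc N (∑ t, v t • (a t p • x t)) ≤ ⟪u, ∑ t, v t • (a t p • x t)⟫ := hNu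
    _ = ∑ t, v t * (a t p * ⟪u, x t⟫) := by simp only [inner_sum, inner_smul_right]
    _ ≤ _ := le_ciSup (f := fun q : ι × dualBall N 1 => ∑ t, v t * (a t q.1 * ⟪(q.2 : Euc d), x t⟫))
        (hbdd.bddAbove_range_sum univ hv) (p, ⟨u, hu⟩)

theorem Esign_iSup_norm_sum_smul_smul_le (hN : IsNorm N) {W : ι → Euc d} {B : ℝ}
    (hW : ∀ p, dualNorm N (W p) ≤ B) {x : Fin n → Euc d} {R : ℝ} (hR : 0 ≤ R)
    (hx : ∀ t, N (x t) ≤ R) {a : Fin n → ι → ℝ} {A : ℝ} (hA : 0 ≤ A) (ha : ∀ t p, |a t p| ≤ A)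
    (ha_lip : ∀ t p q, |a t p - a t q| ≤ A * |⟪W p, x t⟫ - ⟪W q, x t⟫|) :
    Esign n (fun v => ⨆ p, N (∑ t, v t • (a t p • x t))) ≤
      2 * A * (R * B + 1) * Esign n (fun v => N (∑ t, v t • x t)) := by
  have := hN.nonempty_dualBall zero_le_one
  set M := Esign n (fun v => N (∑ t, v t • x t))
  have hb : ∀ t (q : ι × dualBall N 1), |⟪(q.2 : Euc d), x t⟫| ≤ R := fun t q =>
    (hN.abs_inner_le_mul q.2.2 (hx t)).trans_eq (one_mul R)
  have hRa : IsBoundedFamily fun t (q : ι × dualBall N 1) => R * a t q.1 :=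
    IsBoundedFamily.const_mul (f := fun t (q : ι × dualBall N 1) => a t q.1)
      ⟨A, fun t q => ha t q.1⟩ R
  have hb_bdd : IsBoundedFamily fun t (q : ι × dualBall N 1) => ⟪(q.2 : Euc d), x t⟫ := ⟨R, hb⟩
  have hlin : IsBoundedFamily fun t (q : ι × dualBall N 1) => R * A * ⟪W q.1, x t⟫ :=
    IsBoundedFamily.const_mul (f := fun t (q : ι × dualBall N 1) => ⟪W q.1, x t⟫)
      ⟨B * R, fun t q => hN.abs_inner_le_mul (hW q.1) (hx t)⟩ (R * A)
  have hRa_le : rademacher (fun t (q : ι × dualBall N 1) => R * a t q.1) ≤ R * A * B * M := by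
    have hcomp : ∀ t (p q : ι × dualBall N 1), |R * a t p.1 - R * a t q.1| ≤
        |R * A * ⟪W p.1, x t⟫ - R * A * ⟪W q.1, x t⟫| := fun t p q => by
      rw [← mul_sub, ← mul_sub, abs_mul, abs_mul, abs_of_nonneg hR,
        abs_of_nonneg (mul_nonneg hR hA), mul_assoc]
      exact mul_le_mul_of_nonneg_left (ha_lip t p.1 q.1) hR
    calc _ ≤ rademacher (fun t (q : ι × dualBall N 1) => R * A * ⟪W q.1, x t⟫) :=
          rademacher_le_of_abs_sub_le hlin hcomp
      _ ≤ |R * A| * B * M :=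
          rademacher_mul_inner_le hN (W := fun q : ι × dualBall N 1 => W q.1) (fun q => hW q.1) _ x
      _ = R * A * B * M := by rw [abs_of_nonneg (mul_nonneg hR hA)]
  calc _ ≤ rademacher (fun t (q : ι × dualBall N 1) => a t q.1 * ⟪(q.2 : Euc d), x t⟫) :=
        Esign_iSup_norm_sum_le_rademacher hN ⟨A, ha⟩ hx
    _ ≤ rademacher (fun t (q : ι × dualBall N 1) => R * a t q.1 + A * ⟪(q.2 : Euc d), x t⟫) +
        rademacher (fun t (q : ι × dualBall N 1) => R * a t q.1 + -A * ⟪(q.2 : Euc d), x t⟫) := by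
        simpa only [neg_mul, ← sub_eq_add_neg] using
          rademacher_mul_le hA hR (fun t q => ha t q.1) hb
    _ ≤ (R * A * B * M + |A| * 1 * M) + (R * A * B * M + |-A| * 1 * M) := by
        gcongr
        · exact (rademacher_add_le hRa (hb_bdd.const_mul A)).trans
            (add_le_add hRa_le (rademacher_mul_inner_le hN (fun q => q.2.2) A x))
        · exact (rademacher_add_le hRa (hb_bdd.const_mul (-A))).trans
            (add_le_add hRa_le (rademacher_mul_inner_le hN (fun q => q.2.2) (-A) x))
    _ = 2 * A * (R * B + 1) * M := by rw [abs_neg, abs_of_nonneg hA]; ring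

end Rademacher

lemma gradient_comp_inner_sub {d : ℕ} {ρ : ℝ → ℝ} {x w : Euc d} {y : ℝ}
    (hρ : DifferentiableAt ℝ ρ (⟪w, x⟫ - y)) :
    gradient (fun w' => ρ (⟪w', x⟫ - y)) w = deriv ρ (⟪w, x⟫ - y) • x := by
  have hfun : (fun w' : Euc d => ⟪w', x⟫ - y) = fun w' => innerSL ℝ x w' - y := by
    ext w'; simp [real_inner_comm]
  have hlin : HasFDerivAt (fun w' : Euc d => ⟪w', x⟫ - y) (innerSL ℝ x) w := by
    rw [hfun]; exact (innerSL ℝ x).hasFDerivAt.sub_const y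
  have hdual : InnerProductSpace.toDual ℝ _ (deriv ρ (⟪w, x⟫ - y) • x) =
      deriv ρ (⟪w, x⟫ - y) • innerSL ℝ x := by
    ext v; simp
  refine HasGradientAt.gradient ?_
  rw [hasGradientAt_iff_hasFDerivAt, hdual]
  exact hρ.hasDerivAt.comp_hasFDerivAt w hlin

theorem Esign_iSup_norm_sum_gradient_le {d n : ℕ} {N : Euc d → ℝ} (hN : IsNorm N)
    {R B Y₀ Cρ : ℝ} (hR : 0 ≤ R) (hB : 0 ≤ B) (hCρ : 0 ≤ Cρ) {ρ : ℝ → ℝ}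
    (hρd1 : Differentiable ℝ ρ) (hρd2 : Differentiable ℝ (deriv ρ))
    (hbound : ∀ s ∈ Set.Icc (-(B * R + Y₀)) (B * R + Y₀),
      |deriv ρ s| ≤ Cρ ∧ |deriv (deriv ρ) s| ≤ Cρ)
    {x : Fin n → Euc d} (hx : ∀ t, N (x t) ≤ R) {y : Fin n → ℝ} (hy : ∀ t, y t ∈ Set.Icc (-Y₀) Y₀) :
    Esign n (fun ε => ⨆ w : dualBall N B,
        N (∑ t, ε t • gradient (fun w' => ρ (⟪w', x t⟫ - y t)) (w : Euc d))) ≤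
      2 * Cρ * (R * B + 1) * Esign n (fun v => N (∑ t, v t • x t)) := by
  have := hN.nonempty_dualBall hB
  have hI : ∀ t (w : dualBall N B),
      ⟪(w : Euc d), x t⟫ - y t ∈ Set.Icc (-(B * R + Y₀)) (B * R + Y₀) := fun t w => by
    have := abs_le.mp (hN.abs_inner_le_mul w.2 (hx t))
    have := hy t
    constructor <;> linarith [this.1, this.2]
  simp only [gradient_comp_inner_sub (hρd1 _)]
  refine Esign_iSup_norm_sum_smul_smul_le hN (W := Subtype.val) (fun w => w.2) hR hx hCρ
    (fun t w => (hbound _ (hI t w)).1) fun t w w' => ?_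
  have := (convex_Icc _ _).norm_image_sub_le_of_norm_deriv_le (fun s _ => hρd2 s)
    (fun s hs => (hbound s hs).2) (hI t w') (hI t w)
  simpa only [Real.norm_eq_abs, sub_sub_sub_cancel_right] using this

theorem robust_regression_gradient_rademacher_complexity_general {d n : ℕ}
    (N : Euc d → ℝ) (hN : IsNorm N)
    (Ψ : Euc d → ℝ)
    (hlb : ∀ x : Euc d, (1 / 2) * (N x) ^ 2 ≤ Ψ x) (hzero : Ψ 0 = 0) (β : ℝ)
    (hsmooth : ∀ x y : Euc d,
      Ψ x ≤ Ψ y + ⟪gradient Ψ y, x - y⟫ + (β / 2) * (N (x - y)) ^ 2)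
    (R B Y₀ Cρ : ℝ) (hR : 0 ≤ R) (hB : 0 ≤ B) (hY : 0 ≤ Y₀)
    (ρ : ℝ → ℝ)
    (hρd1 : Differentiable ℝ ρ) (hρd2 : Differentiable ℝ (deriv ρ))
    (hbound : ∀ s ∈ Set.Icc (-(B * R + Y₀)) (B * R + Y₀),
      |deriv ρ s| ≤ Cρ ∧ |deriv (deriv ρ) s| ≤ Cρ)
    (x : Fin n → Euc d) (hx : ∀ t, N (x t) ≤ R)
    (y : Fin n → ℝ) (hy : ∀ t, y t ∈ Set.Icc (-Y₀) Y₀) :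
    Esign n (fun ε => ⨆ w : {w : Euc d // dualNorm N w ≤ B},
        N (∑ t, ε t • gradient (fun w' => ρ (⟪w', x t⟫ - y t)) (w : Euc d))) ≤
      (4 * Cρ * B * R + 2 * Cρ) * R * Real.sqrt (2 * β * n) := by
  have hCρ : 0 ≤ Cρ :=
    (abs_nonneg _).trans (hbound 0 ⟨by nlinarith [mul_nonneg hB hR], by positivity⟩).1
  have hM : Esign n (fun v => N (∑ t, v t • x t)) ≤ R * √(2 * β * n) := by
    refine (Esign_norm_sum_smul_le_of_smooth hN hlb hzero hsmooth x).trans ?_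
    have hsum : ∑ t, N (x t) ^ 2 ≤ n * R ^ 2 := by
      simpa using sum_le_sum (s := univ) fun t _ => pow_le_pow_left₀ (hN.nonneg (x t)) (hx t) 2
    rcases le_or_gt β 0 with hβ | hβ
    · rw [Real.sqrt_eq_zero'.mpr (mul_nonpos_of_nonpos_of_nonneg hβ (by positivity))]
      positivity
    · rw [← Real.sqrt_sq hR, ← Real.sqrt_mul (sq_nonneg R)]
      have hnR : 0 ≤ β * (n * R ^ 2) := by positivity
      exact Real.sqrt_le_sqrt (by nlinarith [mul_le_mul_of_nonneg_left hsum hβ.le])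
  calc _ ≤ 2 * Cρ * (R * B + 1) * Esign n (fun v => N (∑ t, v t • x t)) :=
        Esign_iSup_norm_sum_gradient_le hN hR hB hCρ hρd1 hρd2 hbound hx hy
    _ ≤ 2 * Cρ * (R * B + 1) * (R * √(2 * β * n)) := by gcongr
    _ ≤ (4 * Cρ * B * R + 2 * Cρ) * R * √(2 * β * n) := by
        have := mul_nonneg (mul_nonneg (mul_nonneg hCρ hB) hR)
          (mul_nonneg hR (Real.sqrt_nonneg (2 * β * n)))
        nlinarith

/-- Normed Rademacher complexity of robust regression gradients: for a
`β`-smooth norm `N` (witnessed by a convex `Ψ ≥ ½N²`, `Ψ(0)=0` satisfying the `β`-smoothness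
inequality), data with `N(x_t) ≤ R`, labels in `[−Y₀,Y₀]`, and `ρ` whose first two derivatives
are bounded by `C_ρ` on `[−(BR+Y₀), BR+Y₀]`, the expected sup over the dual ball of the norm of
the Rademacher gradient sum is at most `(4C_ρBR + 2C_ρ)·R·√(2βn)`. -/
theorem robust_regression_gradient_rademacher_complexity {d n : ℕ}
    (N : Euc d → ℝ) (hN : IsNorm N)
    (Ψ : Euc d → ℝ) (hconv : ConvexOn ℝ Set.univ Ψ) (hdiff : Differentiable ℝ Ψ)
    (hlb : ∀ x : Euc d, (1 / 2) * (N x) ^ 2 ≤ Ψ x) (hzero : Ψ 0 = 0) (β : ℝ)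
    (hsmooth : ∀ x y : Euc d,
      Ψ x ≤ Ψ y + ⟪gradient Ψ y, x - y⟫ + (β / 2) * (N (x - y)) ^ 2)
    (R B Y₀ Cρ : ℝ) (hR : 0 ≤ R) (hB : 0 ≤ B) (hY : 0 ≤ Y₀)
    (ρ : ℝ → ℝ) (hρpos : ∀ s, 0 ≤ ρ s)
    (hρd1 : Differentiable ℝ ρ) (hρd2 : Differentiable ℝ (deriv ρ))
    (hbound : ∀ s ∈ Set.Icc (-(B * R + Y₀)) (B * R + Y₀),
      |deriv ρ s| ≤ Cρ ∧ |deriv (deriv ρ) s| ≤ Cρ)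
    (x : Fin n → Euc d) (hx : ∀ t, N (x t) ≤ R)
    (y : Fin n → ℝ) (hy : ∀ t, y t ∈ Set.Icc (-Y₀) Y₀) :
    Esign n (fun ε => ⨆ w : {w : Euc d // dualNorm N w ≤ B},
        N (∑ t, ε t • gradient (fun w' => ρ (⟪w', x t⟫ - y t)) (w : Euc d))) ≤
      (4 * Cρ * B * R + 2 * Cρ) * R * Real.sqrt (2 * β * n) :=
  robust_regression_gradient_rademacher_complexity_general N hN Ψ hlb hzero β hsmooth R B Y₀ Cρ hR
    hB hY ρ hρd1 hρd2 hbound x hx y hy
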